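/- Let c, h > 0 and a = g'(κ) < 0 be such that χ_κ(z) = z² − cz − 1 + a e^{−zch} has exactly three real zeros counting multiplicity, μ₃ ≤ μ₂ < 0 < μ₁. Let ψ : ℝ → ℝ be the fundamental solution of D₂y = δ(t), namely: ψ(t) = −((μ₁−μ₂)/χ_κ'(μ₁)) e^{μ₁ t} for t < 0, and for t ≥ 0, ψ is the solution of (D₂y)(t) = 0 with initial conditions y(0) = 1 − (μ₁−μ₂)/χ_κ'(μ₁) and y(s) = ψ(s) for s ∈ [−ch, 0), where (D₂y)(t) = y'(t) − (c−μ₂)y(t) − a e^{−chμ₂} ∫_{−ch}^{0} e^{−μ₂ s} y(t+s) ds. Then ψ(t) < 0 for all t ∈ ℝ, and ψ decays exponentially as t → ±∞. -/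

import Mathlib

/-!
Write `q = ch`, `L = μ₁ - μ₂` and
`G(r) = -(a/L) (e^{-μ₂(q+r)} - e^{-μ₁(q+r)})`, a kernel that is positive on `(-q, 0]`.
Because `χ_κ(μ₁) = χ_κ(μ₂) = 0`, the function `w(t) = ψ(t) - ∫_{-q}^0 G(r) ψ(t+r) dr`
satisfies `w' = μ₁ w` on `(0, ∞)`, and the initial data are chosen exactly so that `w(0) = 0`.
Hence `ψ` obeys the renewal equation `ψ(t) = ∫_{-q}^0 G(r) ψ(t+r) dr` for `t ≥ 0`.
On `(-∞, 0]` the function `ψ` is negative, since `0 < χ_κ'(μ₁) < L`. A first zero of `ψ` would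
then be a positive combination of negative values, so `ψ < 0` everywhere. Finally
`∫ G = 1 + (1-a)/(μ₁μ₂) < 1`, so the maximum of `|ψ|` over consecutive windows of length `q`
decays geometrically.
-/

open Filter Set Asymptotics intervalIntegral

noncomputable section

/-- The characteristic function `χ_κ(z) = z² - cz - 1 + a e^{-zch}` at the positive
equilibrium (`a = g'(κ)`). -/
def chiK (c h a z : ℝ) : ℝ := z ^ 2 - c * z - 1 + a * Real.exp (-(z * c * h))

/-- The derivative `χ_κ'(z) = 2z - c - ach e^{-zch}`. -/
def chiK' (c h a z : ℝ) : ℝ := 2 * z - c - a * c * h * Real.exp (-(z * c * h))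

open MeasureTheory Real Topology

theorem MeasureTheory.LocallyIntegrable.intervalIntegrable {f : ℝ → ℝ} (hf : LocallyIntegrable f)
    (a b : ℝ) : IntervalIntegrable f volume a b :=
  (hf.integrableOn_isCompact isCompact_uIcc).intervalIntegrable

theorem locallyIntegrable_of_eqOn_Iio_of_continuousOn_Ici {f g : ℝ → ℝ} {x₀ : ℝ}
    (hg : Continuous g) (hfg : EqOn f g (Iio x₀)) (hf : ContinuousOn f (Ici x₀)) :
    LocallyIntegrable f := by
  have hf' : Continuous fun t => f (max t x₀) :=
    hf.comp_continuous (continuous_id.max continuous_const) fun t => le_max_right t x₀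
  have hsplit : f = (Iio x₀).indicator g + (Ici x₀).indicator fun t => f (max t x₀) := by
    ext t
    rcases lt_or_ge t x₀ with ht | ht
    · simp [ht, hfg ht, not_le.2 ht]
    · simp [ht, not_lt.2 ht]
  rw [hsplit]
  exact (hg.locallyIntegrable.indicator measurableSet_Iio).add
    (hf'.locallyIntegrable.indicator measurableSet_Ici)

theorem integral_exp_mul {k : ℝ} (hk : k ≠ 0) (a b : ℝ) :
    ∫ x in a..b, exp (k * x) = (exp (k * b) - exp (k * a)) / k := by
  simp only [integral_comp_mul_left (fun x => exp x) hk, integral_exp, smul_eq_mul]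
  field_simp

theorem eq_exp_mul_of_hasDerivAt_off_countable {w : ℝ → ℝ} {μ a b : ℝ} {s : Set ℝ} (hab : a ≤ b)
    (hs : s.Countable) (hc : ContinuousOn w (Icc a b))
    (hd : ∀ t ∈ Ioo a b \ s, HasDerivAt w (μ * w t) t) : w b = exp (μ * (b - a)) * w a := by
  have hconst := integral_eq_of_hasDerivAt_off_countable_of_le (fun t => exp (-(μ * t)) * w t)
    (fun _ => 0) hab hs ((by fun_prop : Continuous fun t => exp (-(μ * t))).continuousOn.mul hc)
    (fun t ht => ?_) intervalIntegrable_const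
  · have e₁ : exp (μ * b) * exp (-(μ * b)) = 1 := by rw [← exp_add]; simp
    have e₂ : exp (μ * (b - a)) = exp (μ * b) * exp (-(μ * a)) := by rw [← exp_add]; ring_nf
    rw [intervalIntegral.integral_zero] at hconst
    linear_combination -exp (μ * b) * hconst - w b * e₁ - w a * e₂
  · have hexp : HasDerivAt (fun t => exp (-(μ * t))) (-(μ * exp (-(μ * t)))) t := by
      simpa [mul_comm] using ((hasDerivAt_id t).const_mul μ).neg.exp
    refine (hexp.fun_mul (hd t ht)).congr_deriv ?_
    ring

theorem mem_Ico_of_le_zero {f : ℝ → ℝ} {A μ : ℝ} (hA : 1 < A) (hμ : 0 < μ)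
    (hneg : ∀ t < 0, f t = -A * exp (μ * t)) (h0 : f 0 = 1 - A) {t : ℝ} (ht : t ≤ 0) :
    f t ∈ Ico (-A) 0 := by
  rcases ht.lt_or_eq with ht | rfl
  · have he : exp (μ * t) ≤ 1 := exp_le_one_iff.2 (by nlinarith)
    rw [hneg t ht]
    constructor <;> nlinarith [exp_pos (μ * t)]
  · rw [h0]
    constructor <;> linarith

theorem isBigO_exp_neg_mul_atTop {α β : ℝ} (h : α ≤ β) :
    (fun t => exp (-(β * t))) =O[atTop] fun t => exp (-(α * t)) := by
  rw [isBigO_exp_comp_exp_comp]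
  exact isBoundedUnder_of_eventually_le (a := 0)
    ((eventually_ge_atTop 0).mono fun t ht => by simp only [Pi.sub_apply]; nlinarith)

theorem isBigO_exp_mul_atBot {α β : ℝ} (h : α ≤ β) :
    (fun t => exp (β * t)) =O[atBot] fun t => exp (α * t) := by
  rw [isBigO_exp_comp_exp_comp]
  exact isBoundedUnder_of_eventually_le (a := 0)
    ((eventually_le_atBot 0).mono fun t ht => by simp only [Pi.sub_apply]; nlinarith)

section SlidingWindow

variable {g : ℝ → ℝ} {q t : ℝ}

theorem integral_sliding_window_eq (hg : LocallyIntegrable g) (q t : ℝ) :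
    ∫ u in t - q..t, g u = (∫ u in (0 : ℝ)..t, g u) - ∫ u in (0 : ℝ)..t - q, g u :=
  (integral_interval_sub_left (hg.intervalIntegrable _ _) (hg.intervalIntegrable _ _)).symm

theorem continuous_integral_sliding_window (hg : LocallyIntegrable g) (q : ℝ) :
    Continuous fun t => ∫ u in t - q..t, g u := by
  simp_rw [integral_sliding_window_eq hg]
  have := continuous_primitive hg.intervalIntegrable 0
  fun_prop

theorem hasDerivAt_integral_sliding_window (hg : LocallyIntegrable g) (ht : ContinuousAt g t)
    (htq : ContinuousAt g (t - q)) :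
    HasDerivAt (fun t => ∫ u in t - q..t, g u) (g t - g (t - q)) t := by
  have hΦ : ∀ x, ContinuousAt g x → HasDerivAt (fun u => ∫ v in (0 : ℝ)..u, g v) (g x) x :=
    fun x hx => integral_hasDerivAt_right (hg.intervalIntegrable 0 x)
      hg.aestronglyMeasurable.stronglyMeasurableAtFilter hx
  simp_rw [integral_sliding_window_eq hg]
  exact (hΦ t ht).fun_sub (HasDerivAt.comp_sub_const t q (hΦ (t - q) htq))

end SlidingWindow

/-- The delay term of `D₂y` is `a e^{-chμ₂} · expWindowIntegral μ₂ (ch) y t`. -/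
def expWindowIntegral (μ q : ℝ) (f : ℝ → ℝ) (t : ℝ) : ℝ :=
  ∫ s in -q..0, exp (-(μ * s)) * f (t + s)

section ExpWindowIntegral

variable {f : ℝ → ℝ} {μ q t : ℝ}

theorem expWindowIntegral_eq (μ q : ℝ) (f : ℝ → ℝ) (t : ℝ) :
    expWindowIntegral μ q f t = exp (μ * t) * ∫ u in t - q..t, exp (-(μ * u)) * f u := by
  have h : ∀ s, exp (-(μ * s)) * f (t + s) = exp (μ * t) * (exp (-(μ * (t + s))) * f (t + s)) := by
    intro s
    rw [← mul_assoc, ← exp_add]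
    ring_nf
  simp_rw [expWindowIntegral, h, intervalIntegral.integral_const_mul,
    integral_comp_add_left (fun u => exp (-(μ * u)) * f u) t]
  ring_nf

theorem continuous_expWindowIntegral (hf : LocallyIntegrable f) (μ q : ℝ) :
    Continuous (expWindowIntegral μ q f) := by
  have := continuous_integral_sliding_window
    (hf.continuous_mul (by fun_prop : Continuous fun u => exp (-(μ * u)))) q
  simp_rw [funext (expWindowIntegral_eq μ q f)]
  fun_prop

theorem hasDerivAt_expWindowIntegral (hf : LocallyIntegrable f) (ht : ContinuousAt f t)
    (htq : ContinuousAt f (t - q)) :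
    HasDerivAt (expWindowIntegral μ q f)
      (f t - exp (μ * q) * f (t - q) + μ * expWindowIntegral μ q f t) t := by
  have hexp : Continuous fun u => exp (-(μ * u)) := by fun_prop
  have hwin := hasDerivAt_integral_sliding_window (hf.continuous_mul hexp)
    (hexp.continuousAt.mul ht) (hexp.continuousAt.mul htq)
  have hexp' : HasDerivAt (fun t => exp (μ * t)) (exp (μ * t) * μ) t := by
    simpa using ((hasDerivAt_id t).const_mul μ).exp
  rw [funext (expWindowIntegral_eq μ q f)]
  refine (hexp'.fun_mul hwin).congr_deriv ?_
  have e₁ : exp (μ * t) * exp (-(μ * t)) = 1 := by rw [← exp_add]; simp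
  have e₂ : exp (μ * t) * exp (-(μ * (t - q))) = exp (μ * q) := by rw [← exp_add]; ring_nf
  linear_combination f t * e₁ - f (t - q) * e₂

end ExpWindowIntegral

theorem intervalIntegrable_mul_comp_add {φ K : ℝ → ℝ} {a b : ℝ} (hK : ContinuousOn K (uIcc a b))
    (hφi : LocallyIntegrable φ) (t : ℝ) :
    IntervalIntegrable (fun r => K r * φ (t + r)) volume a b := by
  have hshift : IntervalIntegrable (fun r => φ (t + r)) volume a b := by
    simpa using (hφi.intervalIntegrable (t + a) (t + b)).comp_add_left t
  exact hshift.continuousOn_mul hK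

section Renewal

variable {φ K : ℝ → ℝ} {q : ℝ}

theorem neg_of_renewal (hq : 0 < q) (hK : ContinuousOn K (Icc (-q) 0))
    (hKpos : ∀ r ∈ Ioo (-q) 0, 0 < K r) (hφi : LocallyIntegrable φ)
    (hφc : ContinuousOn φ (Ici 0)) (hφneg : ∀ t ≤ 0, φ t < 0)
    (hφ : ∀ t, 0 ≤ t → φ t = ∫ r in -q..0, K r * φ (t + r)) (t : ℝ) : φ t < 0 := by
  by_contra! ht
  set S := {s | 0 ≤ s ∧ 0 ≤ φ s}
  have hS : IsClosed S :=
    hφc.preimage_isClosed_of_isClosed isClosed_Ici isClosed_Ici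
  have hSne : S.Nonempty := ⟨t, not_lt.1 fun h => (hφneg t h.le).not_ge ht, ht⟩
  have hSbdd : BddBelow S := ⟨0, fun s hs => hs.1⟩
  obtain ⟨ht₀, hφt₀⟩ : sInf S ∈ S := hS.csInf_mem hSne hSbdd
  have hbefore : ∀ s < sInf S, φ s < 0 := by
    intro s hs
    rcases le_or_gt s 0 with hs0 | hs0
    · exact hφneg s hs0
    · exact lt_of_not_ge fun h => (csInf_le hSbdd ⟨hs0.le, h⟩).not_gt hs
  have hint : 0 < ∫ r in -q..0, -(K r * φ (sInf S + r)) :=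
    intervalIntegral_pos_of_pos_on
      (intervalIntegrable_mul_comp_add (by rwa [uIcc_of_le (by linarith)]) hφi _).neg
      (fun r hr => neg_pos.2 (mul_neg_of_pos_of_neg (hKpos r hr) (hbefore _ (by linarith [hr.2]))))
      (by linarith)
  rw [intervalIntegral.integral_neg, ← hφ _ ht₀] at hint
  linarith

theorem abs_integral_mul_comp_add_le (hq : 0 ≤ q) (hK : ContinuousOn K (Icc (-q) 0))
    (hK0 : ∀ r ∈ Icc (-q) 0, 0 ≤ K r) (hφi : LocallyIntegrable φ) {t B : ℝ}
    (hB : ∀ r ∈ Icc (-q) 0, |φ (t + r)| ≤ B) :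
    |∫ r in -q..0, K r * φ (t + r)| ≤ (∫ r in -q..0, K r) * B := by
  have hq' : -q ≤ 0 := by linarith
  calc |∫ r in -q..0, K r * φ (t + r)| ≤ ∫ r in -q..0, |K r * φ (t + r)| :=
        abs_integral_le_integral_abs hq'
    _ ≤ ∫ r in -q..0, K r * B := by
        refine integral_mono_on hq'
          (intervalIntegrable_mul_comp_add (by rwa [uIcc_of_le hq']) hφi t).abs
          ((hK.intervalIntegrable_of_Icc hq').mul_const B) fun r hr => ?_
        rw [abs_mul, abs_of_nonneg (hK0 r hr)]
        exact mul_le_mul_of_nonneg_left (hB r hr) (hK0 r hr)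
    _ = (∫ r in -q..0, K r) * B := intervalIntegral.integral_mul_const B K

theorem abs_le_mul_pow_of_renewal {ρ M : ℝ} (hq : 0 < q) (hK : ContinuousOn K (Icc (-q) 0))
    (hK0 : ∀ r ∈ Icc (-q) 0, 0 ≤ K r) (hρ : ∫ r in -q..0, K r ≤ ρ) (hρ1 : ρ < 1)
    (hφi : LocallyIntegrable φ) (hφc : ContinuousOn φ (Ici 0))
    (hM : ∀ t ∈ Icc (-q) 0, |φ t| ≤ M)
    (hφ : ∀ t, 0 ≤ t → φ t = ∫ r in -q..0, K r * φ (t + r)) (n : ℕ) :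
    ∀ t ∈ Icc (n * q - q) (n * q), |φ t| ≤ M * ρ ^ n := by
  have hρ0 : 0 ≤ ρ := (intervalIntegral.integral_nonneg (by linarith) hK0).trans hρ
  have hM0 : 0 ≤ M := (abs_nonneg _).trans (hM 0 ⟨by linarith, le_rfl⟩)
  induction n with
  | zero => simpa using hM
  | succ n ih =>
    have hnq : 0 ≤ n * q := by positivity
    obtain ⟨τ, hτ, hτmax⟩ := (isCompact_Icc (a := n * q) (b := n * q + q)).exists_isMaxOn
      (nonempty_Icc.2 (by linarith)) (hφc.mono fun x hx => hnq.trans hx.1).abs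
    have hτle : ∀ t ∈ Icc (n * q) (n * q + q), |φ t| ≤ |φ τ| := fun t ht => hτmax ht
    have hback : ∀ r ∈ Icc (-q) 0, |φ (τ + r)| ≤ max (M * ρ ^ n) |φ τ| := by
      intro r hr
      rcases le_or_gt (τ + r) (n * q) with h | h
      · exact le_max_of_le_left (ih _ ⟨by linarith [hτ.1, hr.1], h⟩)
      · exact le_max_of_le_right (hτle _ ⟨h.le, by linarith [hτ.2, hr.2]⟩)
    have hτρ : |φ τ| ≤ ρ * max (M * ρ ^ n) |φ τ| :=
      calc |φ τ| = |∫ r in -q..0, K r * φ (τ + r)| := by rw [← hφ τ (hnq.trans hτ.1)]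
        _ ≤ (∫ r in -q..0, K r) * max (M * ρ ^ n) |φ τ| :=
          abs_integral_mul_comp_add_le hq.le hK hK0 hφi hback
        _ ≤ ρ * max (M * ρ ^ n) |φ τ| :=
          mul_le_mul_of_nonneg_right hρ (le_max_of_le_right (abs_nonneg _))
    intro t ht
    push_cast at ht
    refine (hτle t ⟨by linarith [ht.1], by linarith [ht.2]⟩).trans ?_
    rcases max_cases (M * ρ ^ n) |φ τ| with ⟨h, -⟩ | ⟨h, -⟩ <;> rw [h] at hτρ
    · exact hτρ.trans_eq (by ring)
    · have : |φ τ| ≤ 0 := by nlinarith [abs_nonneg (φ τ)]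
      exact this.trans (by positivity)

theorem isBigO_exp_of_renewal {M : ℝ} (hq : 0 < q) (hK : ContinuousOn K (Icc (-q) 0))
    (hK0 : ∀ r ∈ Icc (-q) 0, 0 ≤ K r) (hK1 : ∫ r in -q..0, K r < 1)
    (hφi : LocallyIntegrable φ) (hφc : ContinuousOn φ (Ici 0))
    (hM : ∀ t ∈ Icc (-q) 0, |φ t| ≤ M)
    (hφ : ∀ t, 0 ≤ t → φ t = ∫ r in -q..0, K r * φ (t + r)) :
    ∃ α > 0, φ =O[atTop] fun t => exp (-(α * t)) := by
  -- a positive `ρ`, so that `log ρ` is meaningful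
  set ρ := max (∫ r in -q..0, K r) 2⁻¹
  have hρ0 : 0 < ρ := lt_max_of_lt_right (by norm_num)
  have hρ1 : ρ < 1 := max_lt hK1 (by norm_num)
  have hM0 : 0 ≤ M := (abs_nonneg _).trans (hM 0 ⟨by linarith, le_rfl⟩)
  refine ⟨-log ρ / q, div_pos (neg_pos.2 (log_neg hρ0 hρ1)) hq, ?_⟩
  refine IsBigO.of_bound M ((eventually_ge_atTop 0).mono fun t ht => ?_)
  have htn : t / q ≤ ⌈t / q⌉₊ := Nat.le_ceil _
  have hwin : t ∈ Icc (⌈t / q⌉₊ * q - q) (⌈t / q⌉₊ * q) := by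
    have hlt := Nat.ceil_lt_add_one (div_nonneg ht hq.le)
    rw [← sub_lt_iff_lt_add, lt_div_iff₀ hq] at hlt
    constructor <;> linarith [(div_le_iff₀ hq).1 htn]
  rw [norm_of_nonneg (exp_pos _).le, Real.norm_eq_abs]
  calc |φ t| ≤ M * ρ ^ ⌈t / q⌉₊ :=
        abs_le_mul_pow_of_renewal hq hK hK0 (le_max_left _ _) hρ1 hφi hφc hM hφ _ t hwin
    _ = M * ρ ^ (⌈t / q⌉₊ : ℝ) := by rw [rpow_natCast]
    _ ≤ M * ρ ^ (t / q) :=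
        mul_le_mul_of_nonneg_left (rpow_le_rpow_of_exponent_ge hρ0 hρ1.le htn) hM0
    _ = M * exp (-(-log ρ / q * t)) := by rw [rpow_def_of_pos hρ0]; ring_nf

end Renewal

section Characteristic

variable {c h a μ₁ μ₂ : ℝ} {f : ℝ → ℝ}

theorem mul_exp_of_chiK_eq_zero {μ : ℝ} (hz : chiK c h a μ = 0) :
    a * exp (-(μ * (c * h))) = 1 + c * μ - μ ^ 2 := by
  unfold chiK at hz; rw [← mul_assoc]; linarith

theorem chiK'_eq (c h a z : ℝ) :
    chiK' c h a z = 2 * z - c - a * (c * h) * exp (-(z * (c * h))) := by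
  simp only [chiK', mul_assoc]

theorem chiK'_pos (hq : 0 < c * h) (ha : a < 0) (hμ₁ : 0 < μ₁) (hz₁ : chiK c h a μ₁ = 0) :
    0 < chiK' c h a μ₁ := by
  have hX := mul_exp_of_chiK_eq_zero hz₁
  have haX : a * exp (-(μ₁ * (c * h))) < 0 := mul_neg_of_neg_of_pos ha (exp_pos _)
  rw [chiK'_eq]
  nlinarith [mul_pos hq (neg_pos.2 haX)]

theorem chiK'_lt_sub (hq : 0 < c * h) (ha : a < 0) (hμ : μ₂ < μ₁) (hz₁ : chiK c h a μ₁ = 0)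
    (hz₂ : chiK c h a μ₂ = 0) : chiK' c h a μ₁ < μ₁ - μ₂ := by
  have hX := mul_exp_of_chiK_eq_zero hz₁
  have hY := mul_exp_of_chiK_eq_zero hz₂
  have hL : 0 < μ₁ - μ₂ := sub_pos.2 hμ
  have hYX : exp (-(μ₂ * (c * h))) = exp (-(μ₁ * (c * h))) * exp ((μ₁ - μ₂) * (c * h)) := by
    rw [← exp_add]; ring_nf
  have hE : (μ₁ - μ₂) * (c * h) + 1 < exp ((μ₁ - μ₂) * (c * h)) := add_one_lt_exp (by positivity)
  have haX : a * exp (-(μ₁ * (c * h))) < 0 := mul_neg_of_neg_of_pos ha (exp_pos _)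
  rw [chiK'_eq]
  rw [hYX] at hY
  nlinarith [mul_lt_mul_of_neg_left hE haX]

def renewalKernel (c h a μ₁ μ₂ r : ℝ) : ℝ :=
  -a / (μ₁ - μ₂) * (exp (-(μ₂ * (c * h + r))) - exp (-(μ₁ * (c * h + r))))

theorem continuous_renewalKernel : Continuous (renewalKernel c h a μ₁ μ₂) := by
  unfold renewalKernel
  fun_prop

theorem renewalKernel_pos (ha : a < 0) (hμ : μ₂ < μ₁) {r : ℝ} (hr : -(c * h) < r) :
    0 < renewalKernel c h a μ₁ μ₂ r :=
  mul_pos (div_pos (neg_pos.2 ha) (sub_pos.2 hμ)) (sub_pos.2 (exp_lt_exp.2 (by nlinarith)))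

theorem renewalKernel_nonneg (ha : a < 0) (hμ : μ₂ < μ₁) {r : ℝ} (hr : -(c * h) ≤ r) :
    0 ≤ renewalKernel c h a μ₁ μ₂ r :=
  mul_nonneg (div_pos (neg_pos.2 ha) (sub_pos.2 hμ)).le (sub_nonneg.2 (exp_le_exp.2 (by nlinarith)))

theorem integral_exp_neg_mul_add {μ : ℝ} (hμ : μ ≠ 0) (q : ℝ) :
    ∫ r in -q..0, exp (-(μ * (q + r))) = (1 - exp (-(μ * q))) / μ := by
  simp_rw [← neg_mul]
  rw [integral_comp_add_left (fun u => exp (-μ * u)), integral_exp_mul (neg_ne_zero.2 hμ)]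
  simp only [add_zero, neg_mul, add_neg_cancel, mul_zero, exp_zero]
  field_simp
  ring

theorem integral_renewalKernel (hμ₁ : μ₁ ≠ 0) (hμ₂ : μ₂ ≠ 0) (hμ : μ₁ ≠ μ₂)
    (hz₁ : chiK c h a μ₁ = 0) (hz₂ : chiK c h a μ₂ = 0) :
    ∫ r in -(c * h)..0, renewalKernel c h a μ₁ μ₂ r = 1 + (1 - a) / (μ₁ * μ₂) := by
  have hX := mul_exp_of_chiK_eq_zero hz₁
  have hY := mul_exp_of_chiK_eq_zero hz₂
  have hL : μ₁ - μ₂ ≠ 0 := sub_ne_zero.2 hμ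
  unfold renewalKernel
  rw [intervalIntegral.integral_const_mul, intervalIntegral.integral_sub
    (Continuous.intervalIntegrable (by fun_prop) _ _)
    (Continuous.intervalIntegrable (by fun_prop) _ _),
    integral_exp_neg_mul_add hμ₁, integral_exp_neg_mul_add hμ₂]
  generalize exp (-(μ₁ * (c * h))) = X at hX ⊢
  generalize exp (-(μ₂ * (c * h))) = Y at hY ⊢
  field_simp
  linear_combination μ₁ * hY - μ₂ * hX

theorem integral_renewalKernel_lt_one (ha : a < 1) (hμ₂ : μ₂ < 0)
    (hμ₁ : 0 < μ₁) (hz₁ : chiK c h a μ₁ = 0) (hz₂ : chiK c h a μ₂ = 0) :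
    ∫ r in -(c * h)..0, renewalKernel c h a μ₁ μ₂ r < 1 := by
  rw [integral_renewalKernel hμ₁.ne' hμ₂.ne (hμ₂.trans hμ₁).ne' hz₁ hz₂]
  have : (1 - a) / (μ₁ * μ₂) < 0 :=
    div_neg_of_pos_of_neg (by linarith) (mul_neg_of_pos_of_neg hμ₁ hμ₂)
  linarith

theorem integral_renewalKernel_mul_exp (hμ : μ₁ ≠ μ₂) (hz₁ : chiK c h a μ₁ = 0)
    (hz₂ : chiK c h a μ₂ = 0) :
    ∫ r in -(c * h)..0, renewalKernel c h a μ₁ μ₂ r * exp (μ₁ * r) =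
      1 - chiK' c h a μ₁ / (μ₁ - μ₂) := by
  have hX := mul_exp_of_chiK_eq_zero hz₁
  have hY := mul_exp_of_chiK_eq_zero hz₂
  have hL : μ₁ - μ₂ ≠ 0 := sub_ne_zero.2 hμ
  have hYX : exp (-(μ₂ * (c * h))) * exp ((μ₁ - μ₂) * -(c * h)) = exp (-(μ₁ * (c * h))) := by
    rw [← exp_add]; ring_nf
  have hG : ∀ r, renewalKernel c h a μ₁ μ₂ r * exp (μ₁ * r) = -a / (μ₁ - μ₂) *
      (exp (-(μ₂ * (c * h))) * exp ((μ₁ - μ₂) * r) - exp (-(μ₁ * (c * h)))) := by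
    intro r
    simp only [renewalKernel, mul_assoc, sub_mul, ← exp_add]
    ring_nf
  simp_rw [hG]
  rw [intervalIntegral.integral_const_mul, intervalIntegral.integral_sub
    (Continuous.intervalIntegrable (by fun_prop) _ _) intervalIntegrable_const,
    intervalIntegral.integral_const_mul, integral_exp_mul hL, intervalIntegral.integral_const]
  simp only [chiK', mul_zero, exp_zero, smul_eq_mul, sub_neg_eq_add, zero_add]
  rw [show -(μ₁ * c * h) = -(μ₁ * (c * h)) by ring]
  generalize exp (-(μ₁ * (c * h))) = X at hX hYX ⊢
  generalize exp (-(μ₂ * (c * h))) = Y at hY hYX ⊢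
  generalize exp ((μ₁ - μ₂) * -(c * h)) = E at hYX ⊢
  field_simp
  linear_combination a * hYX - hY + hX

theorem integral_renewalKernel_mul_comp_add (hf : LocallyIntegrable f) (t : ℝ) :
    ∫ r in -(c * h)..0, renewalKernel c h a μ₁ μ₂ r * f (t + r) =
      -a / (μ₁ - μ₂) * (exp (-(μ₂ * (c * h))) * expWindowIntegral μ₂ (c * h) f t -
        exp (-(μ₁ * (c * h))) * expWindowIntegral μ₁ (c * h) f t) := by
  have hG : ∀ r, renewalKernel c h a μ₁ μ₂ r * f (t + r) =
      -a / (μ₁ - μ₂) * (exp (-(μ₂ * (c * h))) * (exp (-(μ₂ * r)) * f (t + r)) -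
        exp (-(μ₁ * (c * h))) * (exp (-(μ₁ * r)) * f (t + r))) := by
    intro r
    simp only [renewalKernel, mul_add, neg_add, exp_add]
    ring
  simp_rw [hG]
  rw [intervalIntegral.integral_const_mul, intervalIntegral.integral_sub
    ((intervalIntegrable_mul_comp_add (by fun_prop) hf t).const_mul _)
    ((intervalIntegrable_mul_comp_add (by fun_prop) hf t).const_mul _),
    intervalIntegral.integral_const_mul, intervalIntegral.integral_const_mul]
  rfl

def renewalDefect (c h a μ₁ μ₂ : ℝ) (f : ℝ → ℝ) (t : ℝ) : ℝ :=
  f t - ∫ r in -(c * h)..0, renewalKernel c h a μ₁ μ₂ r * f (t + r)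

theorem hasDerivAt_renewalDefect (hf : LocallyIntegrable f) (hμ : μ₁ ≠ μ₂)
    (hz₁ : chiK c h a μ₁ = 0) (hz₂ : chiK c h a μ₂ = 0) {t : ℝ} (ht : ContinuousAt f t)
    (htq : ContinuousAt f (t - c * h))
    (hd : HasDerivAt f
      ((c - μ₂) * f t + a * exp (-(c * h * μ₂)) * expWindowIntegral μ₂ (c * h) f t) t) :
    HasDerivAt (renewalDefect c h a μ₁ μ₂ f) (μ₁ * renewalDefect c h a μ₁ μ₂ f t) t := by
  have hX := mul_exp_of_chiK_eq_zero hz₁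
  have hY := mul_exp_of_chiK_eq_zero hz₂
  have hL : μ₁ - μ₂ ≠ 0 := sub_ne_zero.2 hμ
  unfold renewalDefect
  simp_rw [integral_renewalKernel_mul_comp_add hf]
  have h₁ := hasDerivAt_expWindowIntegral (μ := μ₁) hf ht htq
  have h₂ := hasDerivAt_expWindowIntegral (μ := μ₂) hf ht htq
  refine (hd.fun_sub (((h₂.const_mul _).fun_sub (h₁.const_mul _)).const_mul _)).congr_deriv ?_
  have hE₁ : exp (-(μ₁ * (c * h))) * exp (μ₁ * (c * h)) = 1 := by rw [← exp_add]; simp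
  have hE₂ : exp (-(μ₂ * (c * h))) * exp (μ₂ * (c * h)) = 1 := by rw [← exp_add]; simp
  rw [show c * h * μ₂ = μ₂ * (c * h) by ring]
  generalize exp (-(μ₁ * (c * h))) = X at *
  generalize exp (-(μ₂ * (c * h))) = Y at *
  have hB : -a / (μ₁ - μ₂) * (μ₁ - μ₂) = -a := by field_simp
  have hK : -a / (μ₁ - μ₂) * (Y - X) = c - μ₁ - μ₂ := by
    field_simp
    linear_combination hX - hY
  -- the delayed values `f (t - ch)` cancel: this is `G(-ch) = 0`
  linear_combination (-f t) * hK + -a / (μ₁ - μ₂) * f (t - c * h) * (hE₂ - hE₁) +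
    Y * expWindowIntegral μ₂ (c * h) f t * hB

theorem continuousOn_renewalDefect {s : Set ℝ} (hf : LocallyIntegrable f)
    (hfs : ContinuousOn f s) : ContinuousOn (renewalDefect c h a μ₁ μ₂ f) s := by
  unfold renewalDefect
  simp_rw [integral_renewalKernel_mul_comp_add hf]
  have := continuous_expWindowIntegral hf μ₁ (c * h)
  have := continuous_expWindowIntegral hf μ₂ (c * h)
  exact hfs.sub (by fun_prop)

theorem renewalDefect_zero_eq_zero (hq : 0 ≤ c * h) (hμ : μ₁ ≠ μ₂) (hz₁ : chiK c h a μ₁ = 0)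
    (hz₂ : chiK c h a μ₂ = 0) (hχ : chiK' c h a μ₁ ≠ 0)
    (hneg : ∀ t < 0, f t = -((μ₁ - μ₂) / chiK' c h a μ₁) * exp (μ₁ * t))
    (h0 : f 0 = 1 - (μ₁ - μ₂) / chiK' c h a μ₁) : renewalDefect c h a μ₁ μ₂ f 0 = 0 := by
  have hint : ∫ r in -(c * h)..0, renewalKernel c h a μ₁ μ₂ r * f (0 + r) =
      ∫ r in -(c * h)..0,
        -((μ₁ - μ₂) / chiK' c h a μ₁) * (renewalKernel c h a μ₁ μ₂ r * exp (μ₁ * r)) := by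
    refine integral_congr_uIoo fun r hr => ?_
    rw [uIoo_of_le (by linarith)] at hr
    rw [zero_add, hneg r hr.2]
    ring
  rw [renewalDefect, hint, intervalIntegral.integral_const_mul,
    integral_renewalKernel_mul_exp hμ hz₁ hz₂, h0]
  field_simp
  ring

theorem eq_integral_renewalKernel_mul (hq : 0 < c * h) (hμ : μ₁ ≠ μ₂)
    (hz₁ : chiK c h a μ₁ = 0) (hz₂ : chiK c h a μ₂ = 0) (hχ : chiK' c h a μ₁ ≠ 0)
    (hf : LocallyIntegrable f)
    (hneg : ∀ t < 0, f t = -((μ₁ - μ₂) / chiK' c h a μ₁) * exp (μ₁ * t))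
    (h0 : f 0 = 1 - (μ₁ - μ₂) / chiK' c h a μ₁) (hcont : ContinuousOn f (Ici 0))
    (hdiff : ∀ t, 0 < t → DifferentiableAt ℝ f t)
    (heq : ∀ t, 0 < t → deriv f t - (c - μ₂) * f t -
      a * exp (-(c * h * μ₂)) * expWindowIntegral μ₂ (c * h) f t = 0)
    {t : ℝ} (ht : 0 ≤ t) : f t = ∫ r in -(c * h)..0, renewalKernel c h a μ₁ μ₂ r * f (t + r) := by
  have hcontAt : ∀ x ≠ 0, ContinuousAt f x := by
    intro x hx
    rcases hx.lt_or_gt with hx | hx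
    · exact (by fun_prop : Continuous fun t => -((μ₁ - μ₂) / chiK' c h a μ₁) * exp (μ₁ * t)
        ).continuousAt.congr ((eventually_lt_nhds hx).mono fun t ht => (hneg t ht).symm)
    · exact hcont.continuousAt (Ici_mem_nhds hx)
  have hd : ∀ s ∈ Ioo 0 t \ {c * h}, HasDerivAt (renewalDefect c h a μ₁ μ₂ f)
      (μ₁ * renewalDefect c h a μ₁ μ₂ f s) s := by
    -- at `s = ch` the delayed argument `s - ch` hits the jump of `f` at `0`
    rintro s ⟨⟨hs, -⟩, hsq⟩
    refine hasDerivAt_renewalDefect hf hμ hz₁ hz₂ (hcontAt s hs.ne') (hcontAt _ ?_) ?_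
    · exact sub_ne_zero.2 hsq
    · exact (hdiff s hs).hasDerivAt.congr_deriv (by linarith [heq s hs])
  have hw := eq_exp_mul_of_hasDerivAt_off_countable ht (countable_singleton (c * h))
    ((continuousOn_renewalDefect hf hcont).mono Icc_subset_Ici_self) hd
  rw [renewalDefect_zero_eq_zero hq.le hμ hz₁ hz₂ hχ hneg h0, mul_zero, renewalDefect] at hw
  exact sub_eq_zero.1 hw

end Characteristic

theorem fundamental_solution_negative_general
    (c h a : ℝ) (hc : 0 < c) (hh : 0 < h) (ha : a < 0)
    (μ₁ μ₂ : ℝ)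
    (hord2 : μ₂ < 0) (hord3 : 0 < μ₁)
    (hz1 : chiK c h a μ₁ = 0) (hz2 : chiK c h a μ₂ = 0)
    (ψ : ℝ → ℝ)
    (hψneg : ∀ t : ℝ, t < 0 → ψ t = -((μ₁ - μ₂) / chiK' c h a μ₁) * Real.exp (μ₁ * t))
    (hψ0 : ψ 0 = 1 - (μ₁ - μ₂) / chiK' c h a μ₁)
    (hψcont : ContinuousOn ψ (Ici 0))
    (hψdiff : ∀ t : ℝ, 0 < t → DifferentiableAt ℝ ψ t)
    (hψeq : ∀ t : ℝ, 0 < t →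
      deriv ψ t - (c - μ₂) * ψ t -
        a * Real.exp (-(c * h * μ₂)) *
          (∫ s in (-(c * h))..(0 : ℝ), Real.exp (-(μ₂ * s)) * ψ (t + s)) = 0) :
    (∀ t : ℝ, ψ t < 0) ∧
    ∃ α : ℝ, 0 < α ∧
      (ψ =O[atTop] fun t => Real.exp (-(α * t))) ∧
      (ψ =O[atBot] fun t => Real.exp (α * t)) := by
  have hq : 0 < c * h := mul_pos hc hh
  have hμ : μ₂ < μ₁ := hord2.trans hord3
  have hχ : 0 < chiK' c h a μ₁ := chiK'_pos hq ha hord3 hz1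
  set A := (μ₁ - μ₂) / chiK' c h a μ₁
  have hA : 1 < A := (one_lt_div hχ).2 (chiK'_lt_sub hq ha hμ hz1 hz2)
  have hinit : ∀ t ≤ 0, ψ t ∈ Ico (-A) 0 := fun t => mem_Ico_of_le_zero hA hord3 hψneg hψ0
  have hloc : LocallyIntegrable ψ :=
    locallyIntegrable_of_eqOn_Iio_of_continuousOn_Ici (by fun_prop) hψneg hψcont
  have hren := fun t (ht : 0 ≤ t) => eq_integral_renewalKernel_mul hq hμ.ne' hz1 hz2 hχ.ne'
    hloc hψneg hψ0 hψcont hψdiff hψeq ht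
  have hK : ContinuousOn (renewalKernel c h a μ₁ μ₂) (Icc (-(c * h)) 0) :=
    continuous_renewalKernel.continuousOn
  refine ⟨neg_of_renewal hq hK (fun r hr => renewalKernel_pos ha hμ hr.1) hloc hψcont
    (fun t ht => (hinit t ht).2) hren, ?_⟩
  obtain ⟨α, hα, hO⟩ := isBigO_exp_of_renewal hq hK (fun r hr => renewalKernel_nonneg ha hμ hr.1)
    (integral_renewalKernel_lt_one (by linarith) hord2 hord3 hz1 hz2) hloc hψcont
    (fun t ht => abs_le.2 ⟨(hinit t ht.2).1, (hinit t ht.2).2.le.trans (by linarith)⟩) hren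
  refine ⟨min α μ₁, lt_min hα hord3, hO.trans (isBigO_exp_neg_mul_atTop (min_le_left _ _)), ?_⟩
  exact ((isBigO_const_mul_self (-A) _ _).congr' ((eventually_lt_atBot 0).mono fun t ht =>
    (hψneg t ht).symm) EventuallyEq.rfl).trans (isBigO_exp_mul_atBot (min_le_right _ _))

/-- The fundamental solution `ψ` of `D₂y = δ(t)` is negative on all of `ℝ` and decays
exponentially at `±∞`. Here `μ₃ ≤ μ₂ < 0 < μ₁` are the three real zeros of `χ_κ`,
`ψ(t) = -((μ₁-μ₂)/χ_κ'(μ₁)) e^{μ₁ t}` for `t < 0`, and on `[0,∞)` the function `ψ` is the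
solution of `(D₂y)(t) = 0` with `y(0) = 1 - (μ₁-μ₂)/χ_κ'(μ₁)`. -/
theorem fundamental_solution_negative
    (c h a : ℝ) (hc : 0 < c) (hh : 0 < h) (ha : a < 0)
    (μ₁ μ₂ μ₃ : ℝ)
    (hord1 : μ₃ ≤ μ₂) (hord2 : μ₂ < 0) (hord3 : 0 < μ₁)
    (hz1 : chiK c h a μ₁ = 0) (hz2 : chiK c h a μ₂ = 0) (hz3 : chiK c h a μ₃ = 0)
    (hall : ∀ x : ℝ, chiK c h a x = 0 → x = μ₁ ∨ x = μ₂ ∨ x = μ₃)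
    (ψ : ℝ → ℝ)
    (hψneg : ∀ t : ℝ, t < 0 → ψ t = -((μ₁ - μ₂) / chiK' c h a μ₁) * Real.exp (μ₁ * t))
    (hψ0 : ψ 0 = 1 - (μ₁ - μ₂) / chiK' c h a μ₁)
    (hψcont : ContinuousOn ψ (Ici 0))
    (hψdiff : ∀ t : ℝ, 0 < t → DifferentiableAt ℝ ψ t)
    (hψeq : ∀ t : ℝ, 0 < t →
      deriv ψ t - (c - μ₂) * ψ t -
        a * Real.exp (-(c * h * μ₂)) *
          (∫ s in (-(c * h))..(0 : ℝ), Real.exp (-(μ₂ * s)) * ψ (t + s)) = 0) :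
    (∀ t : ℝ, ψ t < 0) ∧
    ∃ α : ℝ, 0 < α ∧
      (ψ =O[atTop] fun t => Real.exp (-(α * t))) ∧
      (ψ =O[atBot] fun t => Real.exp (α * t)) :=
  fundamental_solution_negative_general c h a hc hh ha μ₁ μ₂ hord2 hord3 hz1 hz2 ψ hψneg hψ0 hψcont
    hψdiff hψeq
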